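/- arXiv:2601.10603 — 3 statements merged into one kernel-verified Lean document; each statement's English description precedes it below -/
import Mathlib

section
/- Let F be a field and let D be a Δ × (Δ+M−1) matrix over F of rank Δ, where Δ, M ≥ 1. Then there exist an invertible Δ × Δ matrix C over F and a Δ × (Δ+M−1) matrix A over F such that D = C·A and every row of A has at most M nonzero entries. -/
/-!
Since `D` has full row rank, some `Δ` of its columns form an invertible matrix `C`. Then
`A = C⁻¹ * D` has the identity matrix in those columns, so each row of `A` has at most one
nonzero entry among them and at most `M - 1` elsewhere.
-/

namespace Matrix

variable {m n K : Type*} [Fintype m] [Fintype n]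

theorem exists_injective_isUnit_submatrix_of_rank_eq_card [DecidableEq m] [Field K]
    (D : Matrix m n K) (hD : D.rank = Fintype.card m) :
    ∃ g : m → n, Function.Injective g ∧ IsUnit (D.submatrix id g) := by
  obtain ⟨f, hf_col, -, hf_li⟩ := Submodule.exists_fun_fin_finrank_span_eq K (Set.range D.col)
  let e : m ≃ Fin _ := Fintype.equivFinOfCardEq (hD ▸ D.rank_eq_finrank_span_cols)
  choose g hg using fun i => hf_col (e i)
  have hcols : (D.submatrix id g).col = f ∘ e := funext fun i => hg i
  have hli : LinearIndependent K (D.submatrix id g).col := hcols ▸ hf_li.comp e e.injective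
  refine ⟨g, fun i j hij => hli.injective ?_, linearIndependent_cols_iff_isUnit.mp hli⟩
  simp only [hcols, Function.comp_apply, ← hg, hij]

theorem exists_isUnit_mul_submatrix_eq_one_of_rank_eq_card [DecidableEq m] [Field K]
    (D : Matrix m n K) (hD : D.rank = Fintype.card m) :
    ∃ (C : Matrix m m K) (A : Matrix m n K) (g : m → n),
      Function.Injective g ∧ IsUnit C ∧ D = C * A ∧ A.submatrix id g = 1 := by
  obtain ⟨g, hg, hC⟩ := D.exists_injective_isUnit_submatrix_of_rank_eq_card hD
  have hdet : IsUnit (D.submatrix id g).det := (isUnit_iff_isUnit_det _).mp hC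
  refine ⟨D.submatrix id g, (D.submatrix id g)⁻¹ * D, g, hg, hC,
    (mul_nonsing_inv_cancel_left _ D hdet).symm, ?_⟩
  rw [submatrix_mul _ _ id id g Function.bijective_id, submatrix_id_id, nonsing_inv_mul _ hdet]

open Finset in
theorem card_filter_row_ne_zero_add_card_le [DecidableEq m] [DecidableEq n] [DecidableEq K]
    [Zero K] [One K] (A : Matrix m n K) {g : m → n} (hg : Function.Injective g)
    (hA : A.submatrix id g = 1) (r : m) :
    #{k | A r k ≠ 0} + Fintype.card m ≤ Fintype.card n + 1 := by
  have hsub : ({k | A r k ≠ 0} : Finset n) ⊆ insert (g r) (univ.image g)ᶜ := by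
    intro k hk
    rw [mem_insert, mem_compl, mem_image]
    by_contra! hk'
    obtain ⟨j, -, rfl⟩ := hk'.2
    have hjr : r ≠ j := fun h => hk'.1 (h ▸ rfl)
    exact (mem_filter.mp hk).2 (by simpa [hjr] using congrFun (congrFun hA r) j)
  have hcard := (card_le_card hsub).trans (card_insert_le _ _)
  have hm : Fintype.card m ≤ Fintype.card n := Fintype.card_le_of_injective g hg
  rw [card_compl, card_image_of_injective _ hg, card_univ] at hcard
  omega

end Matrix

open scoped Classical

theorem stmt5_general (F : Type*) [Field F] (Δ M : ℕ)
    (D : Matrix (Fin Δ) (Fin (Δ + M - 1)) F) (hrank : D.rank = Δ) :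
    ∃ (C : Matrix (Fin Δ) (Fin Δ) F) (A : Matrix (Fin Δ) (Fin (Δ + M - 1)) F),
      IsUnit C ∧ D = C * A ∧
        ∀ r, (Finset.univ.filter (fun k => A r k ≠ 0)).card ≤ M := by
  obtain ⟨C, A, g, hg, hC, hDCA, hA⟩ :=
    D.exists_isUnit_mul_submatrix_eq_one_of_rank_eq_card (by rw [hrank, Fintype.card_fin])
  refine ⟨C, A, hC, hDCA, fun r => ?_⟩
  have := A.card_filter_row_ne_zero_add_card_le hg hA r
  simp only [Fintype.card_fin] at this
  have := r.pos
  omega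

/-- A Δ × (Δ+M−1) matrix of rank Δ over a field factors as an invertible Δ×Δ
matrix times a matrix whose rows have at most M nonzero entries. -/
theorem stmt5 (F : Type*) [Field F] (Δ M : ℕ) (hΔ : 1 ≤ Δ) (hM : 1 ≤ M)
    (D : Matrix (Fin Δ) (Fin (Δ + M - 1)) F) (hrank : D.rank = Δ) :
    ∃ (C : Matrix (Fin Δ) (Fin Δ) F) (A : Matrix (Fin Δ) (Fin (Δ + M - 1)) F),
      IsUnit C ∧ D = C * A ∧
        ∀ r, (Finset.univ.filter (fun k => A r k ≠ 0)).card ≤ M :=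
  stmt5_general F Δ M D hrank
end

section
/- Let q be a prime power and L, K, R, Δ, M positive integers with Δ ≤ L, M ≤ K. Suppose every matrix D ∈ F_q^{L×K} can be written as D = C·A where C ∈ F_q^{L×R} has Δ-sparse nonzero columns and A ∈ F_q^{R×K} has M-sparse rows. Then (q−1)^R · q^{LK} ≤ (binomial(L,Δ) · q^Δ)^R · (binomial(K,M) · q^M)^R. -/
/-!
Fix for every `D` a factorization `D = C_D * A_D`. Rescaling column `j` of `C_D` by a unit `u j`
and row `j` of `A_D` by `(u j)⁻¹` keeps both sparsity patterns and the product, and because every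
column of `C_D` is nonzero, the pair `(u, D)` can be read back from the rescaled columns and rows.
This injects `(Fˣ)^R × F^{L×K}` into `R`-tuples of pairs of a `Δ`-sparse vector of length `L` and
an `M`-sparse vector of length `K`. A `Δ`-sparse vector is determined by a `Δ`-set containing its
support together with its `Δ` entries there, so there are at most `C(L, Δ) q^Δ` of them.
-/

open Finset Function Matrix

abbrev SparseVec (ι F : Type*) [Zero F] (Δ : ℕ) :=
  {v : ι → F // Nat.card {i // v i ≠ 0} ≤ Δ}

theorem card_sparseVec_le {ι F : Type*} [Fintype ι] [Zero F] [Fintype F] {Δ : ℕ}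
    (hΔ : Δ ≤ Fintype.card ι) :
    Nat.card (SparseVec ι F Δ) ≤ (Fintype.card ι).choose Δ * Fintype.card F ^ Δ := by
  classical
  let supportedIn (S : Finset ι) : Finset (ι → F) :=
    Fintype.piFinset fun i => if i ∈ S then univ else {0}
  have hsub : ({v | Nat.card {i // v i ≠ 0} ≤ Δ} : Finset (ι → F)) ⊆
      (powersetCard Δ univ).biUnion supportedIn := by
    intro v hv
    simp only [mem_filter, mem_univ, true_and, Nat.card_eq_fintype_card,
      Fintype.card_subtype] at hv
    obtain ⟨S, hvS, hS⟩ := exists_superset_card_eq hv (by simpa using hΔ)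
    simp only [mem_biUnion, mem_powersetCard, Fintype.mem_piFinset, supportedIn]
    refine ⟨S, ⟨subset_univ S, hS⟩, fun i => ?_⟩
    split_ifs with hi
    · exact mem_univ _
    · exact mem_singleton.2 (not_not.1 fun h => hi (hvS (by simpa using h)))
  have hcard : ∀ S ∈ powersetCard Δ univ, #(supportedIn S) ≤ Fintype.card F ^ Δ := by
    intro S hS
    simp only [supportedIn, Fintype.card_piFinset, apply_ite card, card_univ, card_singleton,
      prod_ite_mem, univ_inter, prod_const, (mem_powersetCard.1 hS).2, le_refl]
  calc Nat.card (SparseVec ι F Δ)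
      = #({v | Nat.card {i // v i ≠ 0} ≤ Δ} : Finset (ι → F)) := by
        rw [Nat.card_eq_fintype_card, Fintype.card_subtype]
    _ ≤ #((powersetCard Δ univ).biUnion supportedIn) := card_le_card hsub
    _ ≤ #(powersetCard Δ (univ : Finset ι)) * Fintype.card F ^ Δ :=
        card_biUnion_le_card_mul _ _ _ hcard
    _ = (Fintype.card ι).choose Δ * Fintype.card F ^ Δ := by rw [card_powersetCard, card_univ]

theorem injective_rescaledFactors {F m n r : Type*} [Semiring F] [IsLeftCancelMulZero F]
    [Fintype r] (C : Matrix m n F → Matrix m r F) (A : Matrix m n F → Matrix r n F)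
    (hCA : ∀ D, D = C D * A D) (hC : ∀ D j, ∃ i, C D i j ≠ 0) :
    Injective fun p : (r → Fˣ) × Matrix m n F =>
      (fun j i => C p.2 i j * p.1 j, fun j k => ((p.1 j)⁻¹ : Fˣ) * A p.2 j k) := by
  rintro ⟨u, D⟩ ⟨u', D'⟩ h
  simp only [Prod.mk.injEq, funext_iff] at h
  obtain ⟨hcol, hrow⟩ := h
  have hcancel (D : Matrix m n F) (u : r → Fˣ) (i j k) :
      C D i j * u j * (((u j)⁻¹ : Fˣ) * A D j k) = C D i j * A D j k := by
    rw [mul_assoc, Units.mul_inv_cancel_left]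
  have hD : D = D' := by
    ext i k
    rw [hCA D, hCA D', mul_apply, mul_apply]
    refine sum_congr rfl fun j _ => ?_
    rw [← hcancel D u, ← hcancel D' u', hcol, hrow]
  subst hD
  refine Prod.ext (funext fun j => Units.ext ?_) rfl
  obtain ⟨i, hi⟩ := hC D j
  exact mul_left_cancel₀ hi (hcol j i)

theorem stmt11_general (F : Type*) [Field F] [Fintype F] (q L K R Δ M : ℕ)
    (hq : Fintype.card F = q)
    (hΔL : Δ ≤ L) (hMK : M ≤ K)
    (hfact : ∀ D : Matrix (Fin L) (Fin K) F,
      ∃ (C : Matrix (Fin L) (Fin R) F) (A : Matrix (Fin R) (Fin K) F),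
        D = C * A ∧
        (∀ r, (∃ l, C l r ≠ 0) ∧ Nat.card {l : Fin L // C l r ≠ 0} ≤ Δ) ∧
        (∀ r, Nat.card {k : Fin K // A r k ≠ 0} ≤ M)) :
    (q - 1) ^ R * q ^ (L * K) ≤
      (L.choose Δ * q ^ Δ) ^ R * (K.choose M * q ^ M) ^ R := by
  choose C A hCA hCcol hArow using hfact
  let f (p : (Fin R → Fˣ) × Matrix (Fin L) (Fin K) F) :
      (Fin R → SparseVec (Fin L) F Δ) × (Fin R → SparseVec (Fin K) F M) :=
    (fun j => ⟨fun i => C p.2 i j * p.1 j, by simpa using (hCcol p.2 j).2⟩,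
     fun j => ⟨fun k => ((p.1 j)⁻¹ : Fˣ) * A p.2 j k, by simpa using hArow p.2 j⟩)
  have hf : Injective f :=
    Injective.of_comp (f := Prod.map (fun c j => (c j).1) (fun a j => (a j).1))
      (injective_rescaledFactors C A hCA fun D j => (hCcol D j).1)
  calc (q - 1) ^ R * q ^ (L * K) = Nat.card ((Fin R → Fˣ) × Matrix (Fin L) (Fin K) F) := by
        simp [Nat.card_prod, Nat.card_fun, Nat.card_units, Matrix, hq, ← pow_mul, mul_comm]
    _ ≤ Nat.card ((Fin R → SparseVec (Fin L) F Δ) × (Fin R → SparseVec (Fin K) F M)) :=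
        Nat.card_le_card_of_injective f hf
    _ = Nat.card (SparseVec (Fin L) F Δ) ^ R * Nat.card (SparseVec (Fin K) F M) ^ R := by
        rw [Nat.card_prod, Nat.card_fun, Nat.card_fun, Nat.card_fin]
    _ ≤ (L.choose Δ * q ^ Δ) ^ R * (K.choose M * q ^ M) ^ R := by
        gcongr
        · simpa only [hq, Fintype.card_fin] using
            card_sparseVec_le (ι := Fin L) (F := F) (hΔL.trans_eq (Fintype.card_fin L).symm)
        · simpa only [hq, Fintype.card_fin] using
            card_sparseVec_le (ι := Fin K) (F := F) (hMK.trans_eq (Fintype.card_fin K).symm)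

/-- Counting bound: if every L×K matrix over F_q factors as C·A with C having
Δ-sparse nonzero columns and A having M-sparse rows (inner dimension R), then
(q−1)^R · q^{LK} ≤ (C(L,Δ)·q^Δ)^R · (C(K,M)·q^M)^R. -/
theorem stmt11 (F : Type*) [Field F] [Fintype F] (q L K R Δ M : ℕ)
    (hq : Fintype.card F = q)
    (hL : 1 ≤ L) (hK : 1 ≤ K) (hR : 1 ≤ R)
    (hΔ : 1 ≤ Δ) (hM : 1 ≤ M) (hΔL : Δ ≤ L) (hMK : M ≤ K)
    (hfact : ∀ D : Matrix (Fin L) (Fin K) F,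
      ∃ (C : Matrix (Fin L) (Fin R) F) (A : Matrix (Fin R) (Fin K) F),
        D = C * A ∧
        (∀ r, (∃ l, C l r ≠ 0) ∧ Nat.card {l : Fin L // C l r ≠ 0} ≤ Δ) ∧
        (∀ r, Nat.card {k : Fin K // A r k ≠ 0} ≤ M)) :
    (q - 1) ^ R * q ^ (L * K) ≤
      (L.choose Δ * q ^ Δ) ^ R * (K.choose M * q ^ M) ^ R :=
  stmt11_general F q L K R Δ M hq hΔL hMK hfact
end

section
/- Let F be an infinite field and let L, K, Δ, M be positive integers with Δ | L and (Δ+M−1) | K. Then every matrix D ∈ F^{L×K} admits a factorization D = C·A with C ∈ F^{L×R} and A ∈ F^{R×K}, where R = L·K/(Δ+M−1), every column of C has at most Δ nonzero entries, and every row of A has at most M nonzero entries. -/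
/-!
Cut `D` into `Δ × (Δ + M - 1)` blocks. The column space of a block `B` has dimension at most `Δ`,
so some `Δ` columns of `B` span it; with `P` the matrix of these columns, `B = P * Q` where `Q` is
the identity on the chosen columns. A row of `Q` is then supported on its own chosen column and
the `M - 1` unchosen ones. Putting the `P`s side by side within each block row and stacking the `Q`s
within each block column gives `C` and `A`.
-/

open Module Submodule Set

theorem exists_embedding_forall_mem_span_range_comp {K V m n : Type*} [DivisionRing K]
    [AddCommGroup V] [Module K V] [Module.Finite K V] [Fintype m] [Fintype n] (v : n → V)
    (hVm : finrank K V ≤ Fintype.card m) (hmn : Fintype.card m ≤ Fintype.card n) :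
    ∃ ε : m ↪ n, ∀ k, v k ∈ span K (range (v ∘ ε)) := by
  classical
  obtain ⟨b, -, -, hspan, hli⟩ :=
    exists_linearIndepOn_extension (linearIndepOn_empty K v) (empty_subset univ)
  have hb : b.toFinset.card ≤ Fintype.card m := by
    rw [toFinset_card]; exact hli.fintype_card_le_finrank.trans hVm
  obtain ⟨S, hbS, -, hS⟩ :=
    Finset.exists_subsuperset_card_eq (Finset.subset_univ _) hb (by simpa using hmn)
  let e : m ≃ S := Fintype.equivOfCardEq (by simp [hS])
  let ε : m ↪ n := e.toEmbedding.trans (Function.Embedding.subtype _)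
  have hε : range ε = S := by
    ext x
    refine ⟨?_, fun hx => ⟨e.symm ⟨x, hx⟩, by simp [ε]⟩⟩
    rintro ⟨j, rfl⟩
    exact (e j).2
  refine ⟨ε, fun k => ?_⟩
  rw [range_comp, hε]
  exact span_mono (image_mono (by simpa using hbS)) (hspan (mem_image_of_mem v (mem_univ k)))

namespace Matrix

variable {R l m n : Type*}

def RowSparse [Zero R] (A : Matrix m n R) (s : ℕ) : Prop :=
  ∀ i, Nat.card {k // A i k ≠ 0} ≤ s

def ColSparse [Zero R] (A : Matrix m n R) (s : ℕ) : Prop :=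
  ∀ k, Nat.card {i // A i k ≠ 0} ≤ s

theorem ColSparse.submatrix_equiv {o r : Type*} [Zero R] {C : Matrix m r R} {s : ℕ}
    (h : C.ColSparse s) (e : l ≃ m) (f : o → r) : (C.submatrix e f).ColSparse s := fun k =>
  (Nat.card_congr (e.subtypeEquiv fun _ => Iff.rfl)).le.trans (h (f k))

theorem RowSparse.submatrix_equiv {o r : Type*} [Zero R] {A : Matrix r n R} {s : ℕ}
    (h : A.RowSparse s) (f : o → r) (e : l ≃ n) : (A.submatrix f e).RowSparse s := fun i =>
  (Nat.card_congr (e.subtypeEquiv fun _ => Iff.rfl)).le.trans (h (f i))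

theorem exists_eq_submatrix_mul_of_mem_span [CommSemiring R] [Fintype m] [DecidableEq m]
    (B : Matrix l n R) (ε : m ↪ n) (h : ∀ k, B.col k ∈ span R (range (B.col ∘ ε))) :
    ∃ Q : Matrix m n R, B = B.submatrix id ε * Q ∧ Q.submatrix id ε = 1 := by
  set P := B.submatrix id ε
  have hPcol : P.col = B.col ∘ ε := rfl
  have hx : ∀ k, ∃ x, P *ᵥ x = B.col k := fun k => by
    have hk := h k
    rw [← hPcol, ← range_mulVecLin] at hk
    exact LinearMap.mem_range.mp hk
  choose x hx using hx
  let Q : Matrix m n R := (of (Function.extend ε (fun j => Pi.single j 1) x))ᵀ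
  have hQ : ∀ k, P *ᵥ Q.col k = B.col k := fun k => by
    by_cases hk : ∃ j, ε j = k
    · obtain ⟨j, rfl⟩ := hk
      simp [Q, ε.injective.extend_apply, hPcol]
    · simp [Q, Function.extend_apply' _ _ _ hk, hx]
  refine ⟨Q, ?_, ?_⟩
  · ext i k
    exact (congrFun (hQ k) i).symm
  · ext j j'
    simp [Q, ε.injective.extend_apply, Pi.single_apply, one_apply]

theorem rowSparse_of_submatrix_eq_one [Zero R] [One R] [Fintype m] [Fintype n]
    [DecidableEq m] (Q : Matrix m n R) (ε : m ↪ n) (h : Q.submatrix id ε = 1) :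
    Q.RowSparse (Fintype.card n - Fintype.card m + 1) := by
  classical
  intro j
  have hsupp : Finset.univ.filter (Q j · ≠ 0) ⊆ insert (ε j) (Finset.univ.map ε)ᶜ := by
    intro k hk
    by_cases hkε : ∃ j', ε j' = k
    · obtain ⟨j', rfl⟩ := hkε
      have : (1 : Matrix m m R) j j' ≠ 0 := by simpa [← h] using hk
      have hjj' : j' = j := by
        by_contra hne
        exact this (one_apply_ne (Ne.symm hne))
      simp [hjj']
    simp only [Finset.mem_insert, Finset.mem_compl, Finset.mem_map, Finset.mem_univ, true_and]
    exact Or.inr hkε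
  calc Nat.card {k // Q j k ≠ 0} = (Finset.univ.filter (Q j · ≠ 0)).card := by
        rw [Nat.card_eq_fintype_card, Fintype.card_subtype]
    _ ≤ (insert (ε j) (Finset.univ.map ε)ᶜ).card := Finset.card_le_card hsupp
    _ ≤ (Finset.univ.map ε)ᶜ.card + 1 := Finset.card_insert_le _ _
    _ = Fintype.card n - Fintype.card m + 1 := by simp [Finset.card_compl]

theorem exists_eq_mul_rowSparse {F : Type*} [Field F] [Fintype m] [Fintype n]
    (B : Matrix m n F) (h : Fintype.card m ≤ Fintype.card n) :
    ∃ (P : Matrix m m F) (Q : Matrix m n F),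
      B = P * Q ∧ Q.RowSparse (Fintype.card n - Fintype.card m + 1) := by
  classical
  obtain ⟨ε, hε⟩ := exists_embedding_forall_mem_span_range_comp (K := F) B.col (by simp) h
  obtain ⟨Q, hBQ, hQ⟩ := B.exists_eq_submatrix_mul_of_mem_span ε hε
  exact ⟨_, Q, hBQ, rowSparse_of_submatrix_eq_one Q ε hQ⟩

section Blocks

variable {a b r : Type*}

/- Read `blockLeftFactor P` as an `a × (a·b)` block matrix with the blocks `P α β` (`β : b`) side by
side in block row `α` and zeros elsewhere, and `blockRightFactor Q` as an `(a·b) × b` block matrix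
with the blocks `Q α β` (`α : a`) stacked in block column `β`; block `(α, β)` of their product is
`P α β * Q α β`. -/
def blockLeftFactor [Zero R] [DecidableEq a] (P : a → b → Matrix m r R) :
    Matrix (m × a) (r × a × b) R :=
  of fun x y => if x.2 = y.2.1 then P y.2.1 y.2.2 x.1 y.1 else 0

def blockRightFactor [Zero R] [DecidableEq b] (Q : a → b → Matrix r n R) :
    Matrix (r × a × b) (n × b) R :=
  of fun x y => if x.2.2 = y.2 then Q x.2.1 x.2.2 x.1 y.1 else 0

theorem blockLeftFactor_mul_blockRightFactor [NonUnitalNonAssocSemiring R] [Fintype r]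
    [Fintype a] [Fintype b] [DecidableEq a] [DecidableEq b]
    (P : a → b → Matrix m r R) (Q : a → b → Matrix r n R) (i : m) (α : a) (u : n) (β : b) :
    (blockLeftFactor P * blockRightFactor Q) (i, α) (u, β) = (P α β * Q α β) i u := by
  simp [mul_apply, blockLeftFactor, blockRightFactor, Fintype.sum_prod_type, ite_mul, mul_ite]

theorem colSparse_blockLeftFactor [Zero R] [Fintype m] [DecidableEq a]
    (P : a → b → Matrix m r R) : (blockLeftFactor P).ColSparse (Fintype.card m) := by
  rintro ⟨j, α, β⟩
  have hrow : ∀ x : m × a, blockLeftFactor P x (j, α, β) ≠ 0 → x.2 = α := fun x hx =>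
    of_not_not fun hne => hx (by simp [blockLeftFactor, hne])
  rw [← Nat.card_eq_fintype_card]
  refine Nat.card_le_card_of_injective (fun x => x.1.1) ?_
  rintro ⟨⟨i, α₁⟩, h₁⟩ ⟨⟨i₂, α₂⟩, h₂⟩ (rfl : i = i₂)
  obtain rfl : α₁ = α₂ := (hrow _ h₁).trans (hrow _ h₂).symm
  rfl

theorem rowSparse_blockRightFactor [Zero R] [Finite n] [DecidableEq b] {s : ℕ}
    (Q : a → b → Matrix r n R) (hQ : ∀ α β, (Q α β).RowSparse s) :
    (blockRightFactor Q).RowSparse s := by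
  rintro ⟨j, α, β⟩
  have hcol : ∀ y : n × b, blockRightFactor Q (j, α, β) y ≠ 0 → y.2 = β ∧ Q α β j y.1 ≠ 0 := by
    rintro ⟨u, β'⟩ hy
    by_cases hβ : β = β'
    · subst hβ
      simpa [blockRightFactor] using hy
    · exact absurd (by simp [blockRightFactor, hβ]) hy
  let toBlock (y : {y // blockRightFactor Q (j, α, β) y ≠ 0}) : {u // Q α β j u ≠ 0} :=
    ⟨y.1.1, (hcol y.1 y.2).2⟩
  refine (Nat.card_le_card_of_injective toBlock ?_).trans (hQ α β j)
  rintro ⟨⟨u, β₁⟩, h₁⟩ ⟨⟨u₂, β₂⟩, h₂⟩ hu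
  obtain rfl : u = u₂ := congrArg Subtype.val hu
  obtain rfl : β₁ = β₂ := (hcol _ h₁).1.trans (hcol _ h₂).1.symm
  rfl

end Blocks

theorem exists_eq_mul_colSparse_rowSparse {F a b : Type*} [Field F] [Fintype m] [Fintype n]
    [Fintype a] [Fintype b] (D : Matrix (m × a) (n × b) F) (h : Fintype.card m ≤ Fintype.card n) :
    ∃ (C : Matrix (m × a) (m × a × b) F) (A : Matrix (m × a × b) (n × b) F),
      D = C * A ∧ C.ColSparse (Fintype.card m) ∧
        A.RowSparse (Fintype.card n - Fintype.card m + 1) := by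
  classical
  choose P Q hPQ hQ using fun α β => exists_eq_mul_rowSparse (D.submatrix (·, α) (·, β)) h
  refine ⟨blockLeftFactor P, blockRightFactor Q, ?_, colSparse_blockLeftFactor P,
    rowSparse_blockRightFactor Q hQ⟩
  ext ⟨i, α⟩ ⟨u, β⟩
  rw [blockLeftFactor_mul_blockRightFactor, ← hPQ]
  rfl

end Matrix

theorem stmt15_general (F : Type*) [Field F] (L K Δ M : ℕ)
    (hΔ : 1 ≤ Δ) (hM : 1 ≤ M)
    (hΔL : Δ ∣ L) (hdiv : (Δ + M - 1) ∣ K)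
    (D : Matrix (Fin L) (Fin K) F) :
    ∃ (C : Matrix (Fin L) (Fin (L * K / (Δ + M - 1))) F)
      (A : Matrix (Fin (L * K / (Δ + M - 1))) (Fin K) F),
      D = C * A ∧
      (∀ r, Nat.card {l : Fin L // C l r ≠ 0} ≤ Δ) ∧
      (∀ r, Nat.card {k : Fin K // A r k ≠ 0} ≤ M) := by
  obtain ⟨a, rfl⟩ := hΔL
  obtain ⟨b, rfl⟩ := hdiv
  have hR : Δ * a * ((Δ + M - 1) * b) / (Δ + M - 1) = Δ * (a * b) := by
    rw [mul_left_comm, Nat.mul_div_cancel_left _ (by omega), mul_assoc]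
  let eL : Fin (Δ * a) ≃ Fin Δ × Fin a := finProdFinEquiv.symm
  let eK : Fin ((Δ + M - 1) * b) ≃ Fin (Δ + M - 1) × Fin b := finProdFinEquiv.symm
  let eR : Fin (Δ * a * ((Δ + M - 1) * b) / (Δ + M - 1)) ≃ Fin Δ × Fin a × Fin b :=
    Fintype.equivOfCardEq (by simp [hR])
  obtain ⟨C, A, hCA, hC, hA⟩ :=
    Matrix.exists_eq_mul_colSparse_rowSparse (D.submatrix eL.symm eK.symm)
      (by simp only [Fintype.card_fin]; omega)
  rw [Fintype.card_fin] at hC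
  rw [Fintype.card_fin, Fintype.card_fin, show Δ + M - 1 - Δ + 1 = M by omega] at hA
  refine ⟨C.submatrix eL eR, A.submatrix eR eK, ?_, hC.submatrix_equiv eL eR,
    hA.submatrix_equiv eR eK⟩
  rw [Matrix.submatrix_mul_equiv, ← hCA, Matrix.submatrix_submatrix]
  simp

/-- Achievability (Theorem 1, divisible case) as a matrix factorization: over
an infinite field, when Δ ∣ L and (Δ+M−1) ∣ K, every L×K matrix D factors as
D = C·A with inner dimension R = LK/(Δ+M−1), where the columns of C are
Δ-sparse and the rows of A are M-sparse. -/
theorem stmt15 (F : Type*) [Field F] [Infinite F] (L K Δ M : ℕ)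
    (hL : 1 ≤ L) (hK : 1 ≤ K) (hΔ : 1 ≤ Δ) (hM : 1 ≤ M)
    (hΔL : Δ ∣ L) (hdiv : (Δ + M - 1) ∣ K)
    (D : Matrix (Fin L) (Fin K) F) :
    ∃ (C : Matrix (Fin L) (Fin (L * K / (Δ + M - 1))) F)
      (A : Matrix (Fin (L * K / (Δ + M - 1))) (Fin K) F),
      D = C * A ∧
      (∀ r, Nat.card {l : Fin L // C l r ≠ 0} ≤ Δ) ∧
      (∀ r, Nat.card {k : Fin K // A r k ≠ 0} ≤ M) :=
  stmt15_general F L K Δ M hΔ hM hΔL hdiv D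
end
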